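/- For every δ ∈ (0, 1/3] there exist ε > 0 and n₀ ∈ ℕ such that for all n ≥ n₀ there is a set S of more than (1+ε)^n points on the unit sphere of ℓ_2^n that is a bounded and separated antipodal set with some constant d > √(2 − 2δ) ≥ √(4/3) > 1. Consequently H'_α(ℓ_2^n) grows exponentially in n. -/

import Mathlib

/-
Scale the vertices of the cube `{±1}^n` (encoded as `Fin n → Bool`) onto the unit sphere; two
of them have inner product `⟨v, w⟩ / n`. By Chernoff's bound, for a fixed `w` at most
`2 · 2^n · e^{-θ²n/2}` vertices `v` have `|⟨v, w⟩| > θn`, so greedily keeping a vertex and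
discarding its bad neighbours leaves `e^{θ²n/2} / 2` unit vectors with pairwise inner products
in `[-θ, θ]`. If `θ ≤ 1/3`, such a set is antipodal: the functional `⟪x - y, ·⟫ / ‖x - y‖`
takes its maximum at `x`, its minimum at `y`, and `‖x - y‖ ≥ √(2 - 2θ)`. Taking `θ = δ/2`
gives the constant `d > √(2 - 2δ)`. A strictly antipodal set is `1`-separated in the unit
ball, so its size is bounded by a packing number; hence `H'_α` is finite and at least `|S|`.
-/

open Metric

noncomputable section

/-- `S` is a bounded and separated antipodal subset of `X` with constant `d`. -/
def IsBSA {X : Type*} [NormedAddCommGroup X] [NormedSpace ℝ X] (S : Set X) (d : ℝ) : Prop :=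
  S ⊆ closedBall (0 : X) 1 ∧
    ∀ x ∈ S, ∀ y ∈ S, x ≠ y → ∃ f : X →L[ℝ] ℝ, ‖f‖ ≤ 1 ∧
      d ≤ f x - f y ∧ ∀ z ∈ S, f y ≤ f z ∧ f z ≤ f x

/-- The strict antipodality condition (with gap `> 1`). -/
def StrictAntipProp {X : Type*} [NormedAddCommGroup X] [NormedSpace ℝ X] (S : Set X) : Prop :=
  ∀ x ∈ S, ∀ y ∈ S, x ≠ y → ∃ f : X →L[ℝ] ℝ, ‖f‖ ≤ 1 ∧
    1 < f x - f y ∧ ∀ z ∈ S, f y ≤ f z ∧ f z ≤ f x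

/-- The strict antipodal Hadwiger number `H'_α(X)`. -/
def strictHalpha (X : Type*) [NormedAddCommGroup X] [NormedSpace ℝ X] : ℕ :=
  sSup {k : ℕ | ∃ S : Finset X, S.card = k ∧ (S : Set X) ⊆ sphere (0 : X) 1 ∧
    StrictAntipProp (S : Set X)}

open Finset Real
open scoped RealInnerProductSpace

/-- Greedy selection: keep a point, discard its neighbours, repeat. -/
theorem Finset.exists_pairwise_not_rel_card_le_mul {Ω : Type*} [DecidableEq Ω]
    {R : Ω → Ω → Prop} [DecidableRel R] (hsymm : ∀ x y, R x y → R y x) (hrefl : ∀ x, R x x) {b : ℝ}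
    (A : Finset Ω) (hA : ∀ x ∈ A, (#{y ∈ A | R x y} : ℝ) ≤ b) :
    ∃ T ⊆ A, (#A : ℝ) ≤ b * #T ∧ (T : Set Ω).Pairwise fun x y => ¬ R x y := by
  induction A using Finset.strongInduction with
  | H A ih =>
  obtain rfl | ⟨x, hx⟩ := A.eq_empty_or_nonempty
  · exact ⟨∅, empty_subset _, by simp, by simp⟩
  set A' := {y ∈ A | ¬ R x y}
  have hA'A : A' ⊂ A := filter_ssubset.2 ⟨x, hx, not_not.2 (hrefl x)⟩
  obtain ⟨T, hTA', hcard, hT⟩ := ih A' hA'A fun y hy =>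
    le_trans (by gcongr) (hA y (filter_subset _ _ hy))
  have hxT : x ∉ T := fun h => (mem_filter.1 (hTA' h)).2 (hrefl x)
  refine ⟨insert x T, insert_subset hx (hTA'.trans (filter_subset _ _)), ?_, ?_⟩
  · rw [card_insert_of_notMem hxT, ← card_filter_add_card_filter_not (R x)]
    push_cast
    linarith [hA x hx]
  · rw [coe_insert]
    refine hT.insert fun y hy _ => ?_
    have hxy : ¬ R x y := (mem_filter.1 (hTA' hy)).2
    exact ⟨hxy, fun h => hxy (hsymm _ _ h)⟩

section SignCube

variable {ι : Type*} [Fintype ι]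

def boolSign (b : Bool) : ℝ := if b then 1 else -1

lemma boolSign_mul_self (b : Bool) : boolSign b * boolSign b = 1 := by
  cases b <;> norm_num [boolSign]

lemma boolSign_injective : Function.Injective boolSign := by
  intro a b h
  cases a <;> cases b <;> first | rfl | norm_num [boolSign] at h

def signCorr (v w : ι → Bool) : ℝ := ∑ i, boolSign (v i) * boolSign (w i)

lemma signCorr_comm (v w : ι → Bool) : signCorr v w = signCorr w v := by
  simp only [signCorr, mul_comm]

lemma signCorr_self (v : ι → Bool) : signCorr v v = Fintype.card ι := by
  simp [signCorr, boolSign_mul_self]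

variable [DecidableEq ι]

lemma sum_exp_mul_signCorr (t : ℝ) (w : ι → Bool) :
    ∑ v, exp (t * signCorr v w) = (2 * cosh t) ^ Fintype.card ι := by
  have hcoord (b : Bool) : ∑ a : Bool, exp (t * (boolSign a * boolSign b)) = 2 * cosh t := by
    cases b <;> simp [boolSign, cosh_eq] <;> ring
  simp_rw [signCorr, mul_sum, exp_sum]
  rw [← Fintype.prod_sum fun i a => exp (t * (boolSign a * boolSign (w i)))]
  simp only [hcoord, prod_const, card_univ]

/-- Exponential Markov inequality. -/
lemma card_le_mul_signCorr_mul_exp_le (t a : ℝ) (w : ι → Bool) :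
    #{v | a ≤ t * signCorr v w} * exp a ≤ (2 * cosh t) ^ Fintype.card ι := by
  calc #{v | a ≤ t * signCorr v w} * exp a
      = ∑ v ∈ {v | a ≤ t * signCorr v w}, exp a := by rw [sum_const, nsmul_eq_mul]
    _ ≤ ∑ v ∈ {v | a ≤ t * signCorr v w}, exp (t * signCorr v w) :=
        sum_le_sum fun v hv => exp_le_exp.2 (mem_filter.1 hv).2
    _ ≤ ∑ v, exp (t * signCorr v w) :=
        sum_le_sum_of_subset_of_nonneg (subset_univ _) fun _ _ _ => (exp_pos _).le
    _ = (2 * cosh t) ^ Fintype.card ι := sum_exp_mul_signCorr t w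

lemma card_sq_mul_le_mul_signCorr_le (t : ℝ) (w : ι → Bool) :
    (#{v | t ^ 2 * Fintype.card ι ≤ t * signCorr v w} : ℝ)
      ≤ 2 ^ Fintype.card ι * exp (-(t ^ 2 * Fintype.card ι / 2)) := by
  have hcosh : (2 * cosh t) ^ Fintype.card ι
      ≤ 2 ^ Fintype.card ι * exp (t ^ 2 * Fintype.card ι / 2) := by
    calc (2 * cosh t) ^ Fintype.card ι ≤ (2 * exp (t ^ 2 / 2)) ^ Fintype.card ι := by
          gcongr; exact cosh_le_exp_half_sq t
      _ = 2 ^ Fintype.card ι * exp (t ^ 2 * Fintype.card ι / 2) := by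
          rw [mul_pow, ← exp_nat_mul]; ring_nf
  rw [show -(t ^ 2 * Fintype.card ι / 2) = t ^ 2 * Fintype.card ι / 2 - t ^ 2 * Fintype.card ι
    by ring, exp_sub, ← mul_div_assoc, le_div_iff₀ (exp_pos _)]
  exact (card_le_mul_signCorr_mul_exp_le t _ w).trans hcosh

lemma card_lt_abs_signCorr_le {θ : ℝ} (hθ : 0 ≤ θ) (w : ι → Bool) :
    (#{v | θ * Fintype.card ι < |signCorr v w|} : ℝ)
      ≤ 2 * (2 ^ Fintype.card ι * exp (-(θ ^ 2 * Fintype.card ι / 2))) := by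
  have hsplit : ({v | θ * Fintype.card ι < |signCorr v w|} : Finset (ι → Bool))
      ⊆ ({v | θ ^ 2 * Fintype.card ι ≤ θ * signCorr v w} : Finset (ι → Bool)) ∪
        ({v | θ ^ 2 * Fintype.card ι ≤ -θ * signCorr v w} : Finset (ι → Bool)) := by
    intro v hv
    simp only [mem_filter, mem_union, mem_univ, true_and] at hv ⊢
    rcases lt_abs.1 hv with h | h
    · left; nlinarith [mul_nonneg hθ (sub_nonneg.2 h.le)]
    · right; nlinarith [mul_nonneg hθ (sub_nonneg.2 h.le)]
  have hcard : (#{v | θ * Fintype.card ι < |signCorr v w|} : ℝ)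
      ≤ #{v | θ ^ 2 * Fintype.card ι ≤ θ * signCorr v w}
        + #{v | θ ^ 2 * Fintype.card ι ≤ -θ * signCorr v w} := by
    exact_mod_cast (card_le_card hsplit).trans (card_union_le _ _)
  have hpos := card_sq_mul_le_mul_signCorr_le θ w
  have hneg := card_sq_mul_le_mul_signCorr_le (-θ) w
  rw [neg_sq] at hneg
  linarith

theorem exists_finset_pairwise_abs_signCorr_le [Nonempty ι] {θ : ℝ} (hθ0 : 0 ≤ θ)
    (hθ1 : θ < 1) :
    ∃ T : Finset (ι → Bool),
      (T : Set (ι → Bool)).Pairwise (fun v w => |signCorr v w| ≤ θ * Fintype.card ι) ∧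
      exp (θ ^ 2 * Fintype.card ι / 2) ≤ 2 * #T := by
  have hn : (0 : ℝ) < Fintype.card ι := by exact_mod_cast Fintype.card_pos
  obtain ⟨T, -, hcard, hT⟩ := Finset.exists_pairwise_not_rel_card_le_mul
    (R := fun v w : ι → Bool => θ * Fintype.card ι < |signCorr w v|)
    (fun v w h => by rwa [signCorr_comm])
    (fun v => by simp only [signCorr_self, Nat.abs_cast]; nlinarith)
    (univ : Finset (ι → Bool)) fun v _ => by simpa using card_lt_abs_signCorr_le hθ0 v
  refine ⟨T, hT.mono' fun v w h => by rw [signCorr_comm]; exact not_lt.1 h, ?_⟩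
  set x := θ ^ 2 * Fintype.card ι / 2
  rw [card_univ, Fintype.card_fun, Fintype.card_bool, exp_neg] at hcard
  push_cast at hcard
  refine le_of_mul_le_mul_left ?_ (by positivity : (0 : ℝ) < 2 ^ Fintype.card ι)
  calc 2 ^ Fintype.card ι * exp x ≤ 2 * (2 ^ Fintype.card ι * (exp x)⁻¹) * #T * exp x := by
        gcongr
    _ = 2 ^ Fintype.card ι * (2 * #T) := by field_simp

end SignCube

section SignVector

variable {ι : Type*} [Fintype ι]

def signVector (v : ι → Bool) : EuclideanSpace ℝ ι :=
  (√(Fintype.card ι))⁻¹ • WithLp.toLp 2 fun i => boolSign (v i)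

lemma inner_signVector (v w : ι → Bool) :
    ⟪signVector v, signVector w⟫ = signCorr v w / Fintype.card ι := by
  rw [signVector, signVector, real_inner_smul_left, real_inner_smul_right, ← mul_assoc, ← mul_inv,
    mul_self_sqrt (Nat.cast_nonneg _), inv_mul_eq_div]
  simp only [PiLp.inner_apply, RCLike.inner_apply, conj_trivial, signCorr, mul_comm]

lemma norm_signVector [Nonempty ι] (v : ι → Bool) : ‖signVector v‖ = 1 := by
  have hsq : ‖signVector v‖ ^ 2 = 1 := by
    rw [← real_inner_self_eq_norm_sq, inner_signVector, signCorr_self,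
      div_self (Nat.cast_ne_zero.2 Fintype.card_ne_zero)]
  exact (pow_eq_one_iff_of_nonneg (norm_nonneg _) two_ne_zero).1 hsq

lemma signVector_injective : Function.Injective (signVector (ι := ι)) := by
  intro v w h
  funext i
  have : Nonempty ι := ⟨i⟩
  have hscale : (√(Fintype.card ι))⁻¹ ≠ 0 := by positivity
  have hi := congrArg (· i) h
  simp only [signVector, PiLp.smul_apply, smul_eq_mul] at hi
  exact boolSign_injective (mul_left_cancel₀ hscale hi)

end SignVector

theorem exists_finset_sphere_pairwise_abs_inner_le {ι : Type*} [Fintype ι] [Nonempty ι]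
    {θ : ℝ} (hθ0 : 0 ≤ θ) (hθ1 : θ < 1) :
    ∃ S : Finset (EuclideanSpace ℝ ι), (S : Set (EuclideanSpace ℝ ι)) ⊆ sphere 0 1 ∧
      (S : Set (EuclideanSpace ℝ ι)).Pairwise (fun x y => |⟪x, y⟫| ≤ θ) ∧
      exp (θ ^ 2 * Fintype.card ι / 2) ≤ 2 * #S := by
  classical
  obtain ⟨T, hT, hcard⟩ := exists_finset_pairwise_abs_signCorr_le (ι := ι) hθ0 hθ1
  have hn : (0 : ℝ) < Fintype.card ι := by exact_mod_cast Fintype.card_pos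
  refine ⟨T.image signVector, ?_, ?_, ?_⟩
  · simp [Set.subset_def, norm_signVector]
  · rw [coe_image, signVector_injective.injOn.pairwise_image]
    refine hT.mono' fun v w h => ?_
    rwa [Function.onFun, inner_signVector, abs_div, Nat.abs_cast, div_le_iff₀ hn]
  · rwa [card_image_of_injective _ signVector_injective]

section Antipodal

variable {E : Type*} [NormedAddCommGroup E] [InnerProductSpace ℝ E]

lemma inner_sub_mem_Icc_of_abs_inner_le {x y z : E} {θ : ℝ} (hx : ‖x‖ = 1) (hy : ‖y‖ = 1)
    (hθ : θ ≤ 1 / 3) (hxy : |⟪x, y⟫| ≤ θ) (hxz : |⟪x, z⟫| ≤ θ) (hyz : |⟪y, z⟫| ≤ θ) :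
    ⟪x - y, z⟫ ∈ Set.Icc ⟪x - y, y⟫ ⟪x - y, x⟫ := by
  have hx' : ⟪x - y, x⟫ = 1 - ⟪x, y⟫ := by
    rw [inner_sub_left, real_inner_self_eq_norm_sq, hx, real_inner_comm]; ring
  have hy' : ⟪x - y, y⟫ = ⟪x, y⟫ - 1 := by
    rw [inner_sub_left, real_inner_self_eq_norm_sq, hy]; ring
  rw [Set.mem_Icc, hx', hy', inner_sub_left]
  obtain ⟨-, hxy⟩ := abs_le.1 hxy
  obtain ⟨hxz₁, hxz₂⟩ := abs_le.1 hxz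
  obtain ⟨hyz₁, hyz₂⟩ := abs_le.1 hyz
  constructor <;> linarith

lemma inner_sub_le_inner_sub_self (x y : E) : ⟪x - y, y⟫ ≤ ⟪x - y, x⟫ := by
  have := real_inner_self_nonneg (x := x - y)
  rw [inner_sub_right] at this
  linarith

theorem isBSA_of_pairwise_abs_inner_le {S : Set E} {θ : ℝ} (hS : S ⊆ sphere 0 1)
    (hθ : θ ≤ 1 / 3) (hpair : S.Pairwise fun x y => |⟪x, y⟫| ≤ θ) :
    IsBSA S √(2 - 2 * θ) := by
  refine ⟨hS.trans sphere_subset_closedBall, fun x hx y hy hxy => ?_⟩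
  have hnorm {z : E} (hz : z ∈ S) : ‖z‖ = 1 := mem_sphere_zero_iff_norm.1 (hS hz)
  have hd : 0 < ‖x - y‖ := norm_pos_iff.2 (sub_ne_zero.2 hxy)
  have happly (z : E) : (‖x - y‖⁻¹ • innerSL ℝ (x - y)) z = ‖x - y‖⁻¹ * ⟪x - y, z⟫ := rfl
  refine ⟨‖x - y‖⁻¹ • innerSL ℝ (x - y), ?_, ?_, fun z hz => ?_⟩
  · rw [norm_smul, innerSL_apply_norm, norm_inv, norm_norm, inv_mul_cancel₀ hd.ne']
  · have hsq : ‖x - y‖ ^ 2 = 2 - 2 * ⟪x, y⟫ := by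
      rw [norm_sub_sq_real, hnorm hx, hnorm hy]; ring
    rw [happly, happly, ← mul_sub, ← inner_sub_right, real_inner_self_eq_norm_sq, sq,
      ← mul_assoc, inv_mul_cancel₀ hd.ne', one_mul, Real.sqrt_le_left hd.le, hsq]
    linarith [(abs_le.1 (hpair hx hy hxy)).2]
  · rw [happly, happly, happly]
    have hIcc : ⟪x - y, z⟫ ∈ Set.Icc ⟪x - y, y⟫ ⟪x - y, x⟫ := by
      by_cases hzx : z = x
      · subst hzx; exact ⟨inner_sub_le_inner_sub_self z y, le_rfl⟩
      by_cases hzy : z = y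
      · subst hzy; exact ⟨le_rfl, inner_sub_le_inner_sub_self x z⟩
      exact inner_sub_mem_Icc_of_abs_inner_le (hnorm hx) (hnorm hy) hθ (hpair hx hy hxy)
        (hpair hx hz (Ne.symm hzx)) (hpair hy hz (Ne.symm hzy))
    exact ⟨mul_le_mul_of_nonneg_left hIcc.1 (by positivity),
      mul_le_mul_of_nonneg_left hIcc.2 (by positivity)⟩

end Antipodal

lemma TotallyBounded.packingNumber_ne_top {X : Type*} [PseudoEMetricSpace X] {A : Set X}
    (hA : TotallyBounded A) {ε : NNReal} (hε : ε ≠ 0) : packingNumber ε A ≠ ⊤ := by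
  obtain ⟨C, -, hCfin, hC⟩ := exists_finite_isCover_of_totallyBounded (ε := ε / 2)
    (div_ne_zero hε two_ne_zero) hA
  have hpack : packingNumber ε A ≤ C.encard := by
    calc packingNumber ε A = packingNumber (2 * (ε / 2)) A := by rw [mul_div_cancel₀ _ two_ne_zero]
      _ ≤ externalCoveringNumber (ε / 2) A := packingNumber_two_mul_le_externalCoveringNumber _ _
      _ ≤ C.encard := hC.externalCoveringNumber_le_encard
  exact ne_top_of_le_ne_top hCfin.encard_lt_top.ne hpack

section StrictAntipodal

variable {X : Type*} [NormedAddCommGroup X] [NormedSpace ℝ X]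

lemma IsBSA.strictAntipProp {S : Set X} {d : ℝ} (h : IsBSA S d) (hd : 1 < d) :
    StrictAntipProp S := fun x hx y hy hxy => by
  obtain ⟨f, hf, hgap, hbetween⟩ := h.2 x hx y hy hxy
  exact ⟨f, hf, hd.trans_le hgap, hbetween⟩

lemma StrictAntipProp.isSeparated {S : Set X} (h : StrictAntipProp S) : IsSeparated 1 S := by
  intro x hx y hy hxy
  obtain ⟨f, hf, hgap, -⟩ := h x hx y hy hxy
  have hfxy : f x - f y ≤ ‖x - y‖ := by
    calc f x - f y = f (x - y) := (map_sub f x y).symm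
      _ ≤ ‖f (x - y)‖ := le_abs_self _
      _ ≤ 1 * ‖x - y‖ := f.le_of_opNorm_le hf _
      _ = ‖x - y‖ := one_mul _
  rw [edist_dist, dist_eq_norm, ENNReal.one_lt_ofReal]
  linarith

lemma card_le_strictHalpha [ProperSpace X] {S : Finset X} (hS : (S : Set X) ⊆ sphere 0 1)
    (h : StrictAntipProp (S : Set X)) : S.card ≤ strictHalpha X := by
  have hfin := (isCompact_closedBall (0 : X) 1).totallyBounded.packingNumber_ne_top one_ne_zero
  refine le_csSup ⟨(packingNumber 1 (closedBall (0 : X) 1)).toNat, ?_⟩ ⟨S, rfl, hS, h⟩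
  rintro _ ⟨T, rfl, hT, hTanti⟩
  have := hTanti.isSeparated.encard_le_packingNumber (hT.trans sphere_subset_closedBall)
  rw [Set.encard_coe_eq_coe_finsetCard] at this
  simpa using ENat.toNat_le_toNat this hfin

end StrictAntipodal

lemma exists_one_add_pow_lt_of_exp_le {c : ℝ} (hc : 0 < c) :
    ∃ ε > 0, ∃ n₀ : ℕ, ∀ n ≥ n₀, ∀ N : ℝ, exp (c * n) ≤ 2 * N → (1 + ε) ^ n < N := by
  refine ⟨exp (c / 2) - 1, by linarith [one_lt_exp_iff.2 (half_pos hc)], ⌈2 / c⌉₊,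
    fun n hn N hN => ?_⟩
  have hpow : (1 + (exp (c / 2) - 1)) ^ n = exp (c * n / 2) := by
    rw [add_sub_cancel, ← exp_nat_mul]; ring_nf
  have hsq : exp (c * n / 2) ^ 2 = exp (c * n) := by rw [← exp_nat_mul]; ring_nf
  have hcn : 2 ≤ c * n := by
    have := (div_le_iff₀ hc).1 (Nat.ceil_le.1 hn)
    linarith
  have hlarge : 2 < exp (c * n / 2) := by
    linarith [add_one_lt_exp (x := c * n / 2) (by positivity)]
  rw [hpow]
  nlinarith

/-- For every `δ ∈ (0, 1/3]` there exist `ε > 0` and `n₀` such that for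
all `n ≥ n₀` there is a set of more than `(1+ε)^n` points on the unit sphere of `ℓ_2^n`
which is a bounded and separated antipodal set with some constant
`d > √(2 − 2δ) ≥ √(4/3) > 1`. Consequently `H'_α(ℓ_2^n)` grows exponentially in `n`. -/
theorem strictHalpha_euclidean_exponential (δ : ℝ) (hδ0 : 0 < δ) (hδ : δ ≤ 1 / 3) :
    ∃ ε : ℝ, 0 < ε ∧ ∃ n₀ : ℕ, ∀ n : ℕ, n₀ ≤ n →
      ∃ S : Finset (EuclideanSpace ℝ (Fin n)),
        ((1 + ε : ℝ)) ^ n < (S.card : ℝ) ∧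
        (S : Set (EuclideanSpace ℝ (Fin n))) ⊆ sphere 0 1 ∧
        (∃ d : ℝ, Real.sqrt (2 - 2 * δ) < d ∧ 1 < d ∧
          IsBSA (S : Set (EuclideanSpace ℝ (Fin n))) d) ∧
        Real.sqrt (4 / 3) ≤ Real.sqrt (2 - 2 * δ) ∧
        ((1 + ε : ℝ)) ^ n < (strictHalpha (EuclideanSpace ℝ (Fin n)) : ℝ) := by
  obtain ⟨ε, hε, n₀, hn₀⟩ := exists_one_add_pow_lt_of_exp_le (c := (δ / 2) ^ 2 / 2) (by positivity)
  refine ⟨ε, hε, max n₀ 1, fun n hn => ?_⟩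
  have : Nonempty (Fin n) := ⟨⟨0, by omega⟩⟩
  obtain ⟨S, hS, hpair, hcard⟩ :=
    exists_finset_sphere_pairwise_abs_inner_le (ι := Fin n) (θ := δ / 2) (by positivity)
      (by linarith)
  have hbsa := isBSA_of_pairwise_abs_inner_le hS (by linarith) hpair
  have hd : 1 < √(2 - 2 * (δ / 2)) := by rw [Real.lt_sqrt zero_le_one]; linarith
  have hlarge : (1 + ε) ^ n < #S :=
    hn₀ n (le_of_max_le_left hn) _ (by rwa [Fintype.card_fin, mul_div_right_comm] at hcard)
  refine ⟨S, hlarge, hS, ⟨_, ?_, hd, hbsa⟩, ?_, hlarge.trans_le ?_⟩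
  · exact Real.sqrt_lt_sqrt (by linarith) (by linarith)
  · exact Real.sqrt_le_sqrt (by linarith)
  · exact_mod_cast card_le_strictHalpha hS (hbsa.strictAntipProp hd)
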